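/- If a smooth curve y : [0,1] → ℝⁿ satisfies the Euler–Lagrange equation for the energy cost, ÿ = (‖ẏ‖²/K(y)) ∇K(y) − (2 (∇K(y))ᵀ ẏ / K(y)) ẏ, where K is a smooth strictly positive function, then the speed K(y(t)) ‖ẏ(t)‖ is constant in t (equivalently, d/dt [K(y(t))² ‖ẏ(t)‖²] = 0). -/

import Mathlib

open scoped RealInnerProductSpace

theorem stmt_2 (n : ℕ) (K : EuclideanSpace ℝ (Fin n) → ℝ) (hK : ContDiff ℝ (⊤ : ℕ∞) K)
    (hKpos : ∀ x, 0 < K x) (y : ℝ → EuclideanSpace ℝ (Fin n)) (hy : ContDiff ℝ 2 y)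
    (hODE : ∀ t ∈ Set.Icc (0 : ℝ) 1,
      deriv (deriv y) t = (‖deriv y t‖ ^ 2 / K (y t)) • gradient K (y t)
        - (2 * ⟪gradient K (y t), deriv y t⟫ / K (y t)) • deriv y t) :
    ∀ t ∈ Set.Icc (0 : ℝ) 1, K (y t) * ‖deriv y t‖ = K (y 0) * ‖deriv y 0‖ := by
  have hKd : Differentiable ℝ K := hK.differentiable (by simp)
  have hy1 : Differentiable ℝ y := hy.differentiable (by norm_num)
  have hy2' : ContDiff ℝ 1 (deriv y) := by
    have h2 : ContDiff ℝ (1 + 1) y := hy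
    exact (contDiff_succ_iff_deriv.mp h2).2.2
  have hy2 : Differentiable ℝ (deriv y) := hy2'.differentiable one_ne_zero
  set g : ℝ → ℝ := fun s => (K (y s)) ^ 2 * ⟪deriv y s, deriv y s⟫ with hg
  -- derivative of K ∘ y
  have hKt : ∀ t : ℝ, HasDerivAt (fun s => K (y s)) ⟪gradient K (y t), deriv y t⟫ t := by
    intro t
    have hgrad : HasGradientAt K (gradient K (y t)) (y t) :=
      (hKd (y t)).hasGradientAt
    have hgf : HasFDerivAt K ((InnerProductSpace.toDual ℝ _) (gradient K (y t))) (y t) := hgrad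
    have := hgf.comp_hasDerivAt t (hy1 t).hasDerivAt
    simpa [Function.comp_def] using this
  have hgD : ∀ t : ℝ, HasDerivAt g
      (2 * K (y t) ^ 1 * ⟪gradient K (y t), deriv y t⟫ * ⟪deriv y t, deriv y t⟫
        + K (y t) ^ 2 * (⟪deriv (deriv y) t, deriv y t⟫ + ⟪deriv y t, deriv (deriv y) t⟫)) t := by
    intro t
    have h1 : HasDerivAt (fun s => (K (y s)) ^ 2)
        (2 * K (y t) ^ 1 * ⟪gradient K (y t), deriv y t⟫) t := by
      simpa using (hKt t).fun_pow 2
    have h2 : HasDerivAt (fun s => ⟪deriv y s, deriv y s⟫)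
        (⟪deriv (deriv y) t, deriv y t⟫ + ⟪deriv y t, deriv (deriv y) t⟫) t := by
      have := (hy2 t).hasDerivAt.inner ℝ (hy2 t).hasDerivAt
      simpa [add_comm] using this
    simpa [hg, mul_comm, mul_assoc, mul_left_comm] using h1.fun_mul h2
  have hzero : ∀ t ∈ Set.Ico (0:ℝ) 1, HasDerivWithinAt g 0 (Set.Ici t) t := by
    intro t ht
    have htI : t ∈ Set.Icc (0:ℝ) 1 := ⟨ht.1, ht.2.le⟩
    have hODEt := hODE t htI
    have hD := hgD t
    set k := K (y t) with hk
    set c := ⟪gradient K (y t), deriv y t⟫ with hc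
    set I := ⟪deriv y t, deriv y t⟫ with hI
    have hkne : k ≠ 0 := (hKpos (y t)).ne'
    have hnorm : ‖deriv y t‖ ^ 2 = I := real_inner_self_eq_norm_sq (deriv y t) |>.symm
    have hinner1 : ⟪deriv (deriv y) t, deriv y t⟫ = (I / k) * c - (2 * c / k) * I := by
      rw [hODEt, hnorm]
      rw [inner_sub_left, real_inner_smul_left, real_inner_smul_left]
    have hinner2 : ⟪deriv y t, deriv (deriv y) t⟫ = (I / k) * c - (2 * c / k) * I := by
      rw [real_inner_comm]; exact hinner1
    have : (2 * k ^ 1 * c * I + k ^ 2 * (⟪deriv (deriv y) t, deriv y t⟫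
        + ⟪deriv y t, deriv (deriv y) t⟫)) = 0 := by
      rw [hinner1, hinner2]
      field_simp
      ring
    rw [this] at hD
    exact hD.hasDerivWithinAt
  have hcont : ContinuousOn g (Set.Icc 0 1) := by
    apply Continuous.continuousOn
    exact ((hKd.continuous.comp hy1.continuous).pow 2).mul
      ((hy2.continuous.inner hy2.continuous))
  have hconst : ∀ t ∈ Set.Icc (0:ℝ) 1, g t = g 0 :=
    constant_of_has_deriv_right_zero hcont hzero
  intro t ht
  have hgt := hconst t ht
  have hsq : (K (y t) * ‖deriv y t‖) ^ 2 = (K (y 0) * ‖deriv y 0‖) ^ 2 := by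
    have h1 : g t = (K (y t) * ‖deriv y t‖) ^ 2 := by
      show K (y t) ^ 2 * ⟪deriv y t, deriv y t⟫ = _
      rw [real_inner_self_eq_norm_sq]; ring
    have h2 : g 0 = (K (y 0) * ‖deriv y 0‖) ^ 2 := by
      show K (y 0) ^ 2 * ⟪deriv y 0, deriv y 0⟫ = _
      rw [real_inner_self_eq_norm_sq]; ring
    rw [← h1, ← h2, hgt]
  have ha : 0 ≤ K (y t) * ‖deriv y t‖ :=
    mul_nonneg (hKpos (y t)).le (norm_nonneg _)
  have hb : 0 ≤ K (y 0) * ‖deriv y 0‖ :=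
    mul_nonneg (hKpos (y 0)).le (norm_nonneg _)
  nlinarith [hsq, ha, hb]
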